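/- Let k ≥ 2 and let G be an odd k⁺-critical graph with respect to taking minors. Then the minimum degree of G satisfies δ(G) ≥ ⌊k/2⌋. -/

import Mathlib

open SimpleGraph

/-- The degree of a vertex, as the cardinality of its neighbor set. -/
noncomputable def deg {V : Type} (G : SimpleGraph V) (v : V) : ℕ := (G.neighborSet v).ncard

/-- `H` is a minor of `G`, via branch sets. -/
def IsMinor {W V : Type} (H : SimpleGraph W) (G : SimpleGraph V) : Prop :=
  ∃ B : W → Set V,
    (∀ w, (B w).Nonempty) ∧
    (∀ w, (G.induce (B w)).Connected) ∧
    (Pairwise fun w₁ w₂ => Disjoint (B w₁) (B w₂)) ∧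
    (∀ w₁ w₂, H.Adj w₁ w₂ → ∃ v₁ ∈ B w₁, ∃ v₂ ∈ B w₂, G.Adj v₁ v₂)

/-- A graph is planar iff it has no `K₅` and no `K₃,₃` minor (Wagner's theorem). -/
def IsPlanar {V : Type} (G : SimpleGraph V) : Prop :=
  ¬ IsMinor (completeGraph (Fin 5)) G ∧
  ¬ IsMinor (completeBipartiteGraph (Fin 3) (Fin 3)) G

/-- `G` has thickness at most `t`: its edge set partitions into `t` planar subgraphs. -/
def ThicknessLE {V : Type} (G : SimpleGraph V) (t : ℕ) : Prop :=
  ∃ c : Sym2 V → Fin t, ∀ i : Fin t,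
    IsPlanar (SimpleGraph.fromEdgeSet {e | e ∈ G.edgeSet ∧ c e = i})

/-- The thickness of a graph. -/
noncomputable def thickness {V : Type} (G : SimpleGraph V) : ℕ :=
  sInf {t | ThicknessLE G t}

/-- `φ` is an odd coloring of `G` with `k` colors. -/
def IsOddColoring {V : Type} (G : SimpleGraph V) {k : ℕ} (φ : V → Fin k) : Prop :=
  (∀ ⦃u v⦄, G.Adj u v → φ u ≠ φ v) ∧
  ∀ v : V, (G.neighborSet v).Nonempty →
    ∃ c : Fin k, Odd ({u | u ∈ G.neighborSet v ∧ φ u = c}.ncard)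

/-- The odd chromatic number of `G`. -/
noncomputable def oddChrom {V : Type} (G : SimpleGraph V) : ℕ :=
  sInf {k | ∃ φ : V → Fin k, IsOddColoring G φ}

/-- `G` is odd `k⁺`-critical. -/
def OddCritical {V : Type} (G : SimpleGraph V) (k : ℕ) : Prop :=
  k ≤ oddChrom G ∧ ∀ H : G.Subgraph, H ≠ ⊤ → oddChrom H.coe < k

/-- A vertex is `n`-easy if its degree is odd or it has a neighbor of degree `2i`, `1 ≤ i ≤ n`. -/
def NEasy {V : Type} (G : SimpleGraph V) (n : ℕ) (v : V) : Prop :=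
  Odd (deg G v) ∨ ∃ u ∈ G.neighborSet v, ∃ i, 1 ≤ i ∧ i ≤ n ∧ deg G u = 2 * i


/-- `G` is odd `k⁺`-critical with respect to taking minors. -/
def OddMinorCritical {V : Type} (G : SimpleGraph V) (k : ℕ) : Prop :=
  k ≤ oddChrom G ∧
  ∀ (W : Type) (H : SimpleGraph W), IsMinor H G → ¬ IsMinor G H → oddChrom H < k

/-!
Suppose `deg v < ⌊k/2⌋`. Contracting an edge `vu` onto `u` (or deleting `v` if it is isolated)
gives a minor with fewer vertices, hence an odd colouring with `k - 1` colours. Read back on `G`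
it satisfies every condition that does not involve the colour of `v`, and the colour of `u`
occurs exactly once around `v`. A neighbour `x` of `v` rules out at most two colours for `v`:
its own, and at most one colour whose parity at `x` the choice could spoil. As
`2 deg v < k - 1`, some colour survives, giving an odd `(k - 1)`-colouring of `G`.
-/

open Function

variable {V W : Type} {α : Type*}

section Minor

lemma IsMinor.card_le [Finite V] {H : SimpleGraph W} {G : SimpleGraph V} (h : IsMinor H G) :
    Nat.card W ≤ Nat.card V := by
  obtain ⟨B, hne, -, hdisj, -⟩ := h
  refine Nat.card_le_card_of_injective (fun w => (hne w).some) fun a b hab => ?_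
  by_contra hab'
  have hab : (hne a).some = (hne b).some := hab
  exact Set.disjoint_left.mp (hdisj hab') (hne a).some_mem (hab ▸ (hne b).some_mem)

lemma isMinor_comap_of_injective (G : SimpleGraph V) {f : W → V} (hf : Injective f) :
    IsMinor (G.comap f) G :=
  ⟨fun w => {f w}, fun _ => Set.singleton_nonempty _, fun _ => ⟨Preconnected.of_subsingleton⟩,
    fun _ _ hab => Set.disjoint_singleton.mpr (hf.ne hab),
    fun a b h => ⟨f a, rfl, f b, rfl, h⟩⟩

/-- Contraction of the edge `uv` onto `u`: `v` is deleted and its neighbours are joined to `u`. -/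
def SimpleGraph.contractInto (G : SimpleGraph V) (u v : V) : SimpleGraph {x // x ≠ v} :=
  SimpleGraph.fromRel fun a b => G.Adj a b ∨ (a.1 = u ∧ G.Adj v b)

@[simp]
lemma SimpleGraph.contractInto_adj {G : SimpleGraph V} {u v : V} {a b : {x // x ≠ v}} :
    (G.contractInto u v).Adj a b ↔
      a ≠ b ∧
        ((G.Adj a b ∨ (a.1 = u ∧ G.Adj v b)) ∨ (G.Adj b a ∨ (b.1 = u ∧ G.Adj v a))) :=
  fromRel_adj _ a b

lemma isMinor_contractInto {G : SimpleGraph V} {u v : V} (huv : G.Adj u v) :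
    IsMinor (G.contractInto u v) G := by
  classical
  set B : {x // x ≠ v} → Set V := fun w => if w.1 = u then {u, v} else {w.1}
  have mem_B : ∀ w x, x ∈ B w ↔ x = w ∨ (w.1 = u ∧ x = v) := by
    intro w x
    by_cases hw : w.1 = u <;> simp [B, hw]
  have self_mem : ∀ w, w.1 ∈ B w := fun w => (mem_B w w).mpr (Or.inl rfl)
  have v_mem : ∀ w, w.1 = u → v ∈ B w := fun w hw => (mem_B w v).mpr (Or.inr ⟨hw, rfl⟩)
  refine ⟨B, fun w => ⟨w, self_mem w⟩, fun w => ?_, fun a b hab => ?_, ?_⟩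
  · by_cases hw : w.1 = u
    · rw [show B w = {u, v} from if_pos hw]
      exact induce_pair_connected_of_adj huv
    · rw [show B w = {w.1} from if_neg hw]
      exact ⟨Preconnected.of_subsingleton⟩
  · refine Set.disjoint_left.mpr fun x hxa hxb => ?_
    rw [mem_B] at hxa hxb
    rcases hxa with rfl | ⟨hau, rfl⟩ <;> rcases hxb with hxb | ⟨hbu, hxb⟩
    · exact hab (Subtype.ext hxb)
    · exact a.2 hxb
    · exact b.2 hxb.symm
    · exact hab (Subtype.ext (hau.trans hbu.symm))
  · rintro a b ⟨-, (hab | ⟨hau, hvb⟩) | (hba | ⟨hbu, hva⟩)⟩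
    · exact ⟨a, self_mem a, b, self_mem b, hab⟩
    · exact ⟨v, v_mem a hau, b, self_mem b, hvb⟩
    · exact ⟨a, self_mem a, b, self_mem b, hba.symm⟩
    · exact ⟨a, self_mem a, v, v_mem b hbu, hva.symm⟩

end Minor

section OddColoring

variable {G : SimpleGraph V} {H : SimpleGraph W}

def HasOddColorAt (G : SimpleGraph V) (φ : V → α) (x : V) : Prop :=
  ∃ c, Odd {u | u ∈ G.neighborSet x ∧ φ u = c}.ncard

lemma HasOddColorAt.congr {φ φ' : V → α} {x : V} (h : HasOddColorAt G φ x)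
    (hφ : ∀ u ∈ G.neighborSet x, φ u = φ' u) : HasOddColorAt G φ' x := by
  obtain ⟨c, hc⟩ := h
  refine ⟨c, ?_⟩
  have : {u | u ∈ G.neighborSet x ∧ φ' u = c} = {u | u ∈ G.neighborSet x ∧ φ u = c} :=
    Set.ext fun u => and_congr_right fun hu => by rw [hφ u hu]
  rwa [this]

lemma HasOddColorAt.of_comp {f : W → V} (hf : Injective f) {φ : V → α} {w : W}
    (hN : G.neighborSet (f w) = f '' H.neighborSet w) (h : HasOddColorAt H (φ ∘ f) w) :
    HasOddColorAt G φ (f w) := by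
  obtain ⟨c, hc⟩ := h
  refine ⟨c, ?_⟩
  have : {u | u ∈ G.neighborSet (f w) ∧ φ u = c} =
      f '' {u | u ∈ H.neighborSet w ∧ φ (f u) = c} := by
    rw [hN]
    ext u
    simp only [Set.mem_image, Set.mem_ofPred_eq]
    constructor
    · rintro ⟨⟨y, hy, rfl⟩, hc⟩
      exact ⟨y, ⟨hy, hc⟩, rfl⟩
    · rintro ⟨y, ⟨hy, hc⟩, rfl⟩
      exact ⟨⟨y, hy, rfl⟩, hc⟩
  rw [this, Set.ncard_image_of_injective _ hf]
  exact hc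

/-- If some colour is odd on `N(x) \ {v}`, take it as `b`; otherwise whatever colour `v` gets
becomes odd at `x`. -/
lemma exists_forall_ne_hasOddColorAt_update [Finite V] [DecidableEq V] (ψ : V → α) {v x : V}
    (hxv : G.Adj x v) : ∃ b, ∀ c, c ≠ b → HasOddColorAt G (update ψ v c) x := by
  set S : α → Set V := fun d => {u | u ∈ G.neighborSet x ∧ u ≠ v ∧ ψ u = d}
  have recolor_ne : ∀ c d, c ≠ d →
      {u | u ∈ G.neighborSet x ∧ update ψ v c u = d} = S d := by
    intro c d hcd
    ext u
    by_cases huv : u = v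
    · subst huv
      simp [S, hcd]
    · simp [S, huv]
  have recolor_eq : ∀ c,
      {u | u ∈ G.neighborSet x ∧ update ψ v c u = c} = insert v (S c) := by
    intro c
    ext u
    by_cases huv : u = v
    · subst huv
      simp [S, hxv]
    · simp [S, huv]
  by_cases hodd : ∃ d, Odd (S d).ncard
  · obtain ⟨d, hd⟩ := hodd
    exact ⟨d, fun c hcd => ⟨d, by rwa [recolor_ne c d hcd]⟩⟩
  · simp only [not_exists, Nat.not_odd_iff_even] at hodd
    refine ⟨ψ v, fun c _ => ⟨c, ?_⟩⟩
    rw [recolor_eq, Set.ncard_insert_of_notMem fun h => h.2.1 rfl]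
    exact (hodd c).add_one

/-- `ψ` meets every condition of an odd colouring of `G` that does not read the colour of `v`. -/
def IsOddColoringOff (G : SimpleGraph V) (ψ : V → α) (v : V) : Prop :=
  (∀ ⦃a b⦄, a ≠ v → b ≠ v → G.Adj a b → ψ a ≠ ψ b) ∧
  ∀ x, ¬ G.Adj x v → (G.neighborSet x).Nonempty → HasOddColorAt G ψ x

lemma IsOddColoringOff.exists_isOddColoring_update [Finite V] [DecidableEq V] {n : ℕ}
    {ψ : V → Fin n} {v : V} (hψ : IsOddColoringOff G ψ v) (hdeg : 2 * deg G v < n) :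
    ∃ c, IsOddColoring G (update ψ v c) := by
  have : Nonempty (Fin n) := ⟨⟨0, by omega⟩⟩
  choose! b hb using fun x (hx : G.Adj x v) => exists_forall_ne_hasOddColorAt_update ψ hx
  obtain ⟨c, hc⟩ : ∃ c, c ∉ ψ '' G.neighborSet v ∪ b '' G.neighborSet v := by
    have hlt : (ψ '' G.neighborSet v ∪ b '' G.neighborSet v).ncard < Nat.card (Fin n) := calc
      _ ≤ (ψ '' G.neighborSet v).ncard + (b '' G.neighborSet v).ncard := Set.ncard_union_le _ _
      _ ≤ deg G v + deg G v := add_le_add (Set.ncard_image_le (Set.toFinite _))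
          (Set.ncard_image_le (Set.toFinite _))
      _ < Nat.card (Fin n) := by rw [Nat.card_eq_fintype_card, Fintype.card_fin]; omega
    by_contra! h
    exact hlt.ne (by rw [Set.eq_univ_of_forall h, Set.ncard_univ])
  simp only [Set.mem_union, Set.mem_image, mem_neighborSet, not_or, not_exists, not_and] at hc
  refine ⟨c, fun a a' haa' => ?_, fun x hx => ?_⟩
  · by_cases ha : a = v
    · subst ha
      rw [update_self, update_of_ne haa'.ne']
      exact fun h => hc.1 a' haa' h.symm
    by_cases ha' : a' = v
    · subst ha'
      rw [update_of_ne ha, update_self]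
      exact hc.1 a haa'.symm
    rw [update_of_ne ha, update_of_ne ha']
    exact hψ.1 ha ha' haa'
  · by_cases hxv : G.Adj x v
    · exact hb x hxv c fun h => hc.2 x hxv.symm h.symm
    · exact (hψ.2 x hxv hx).congr fun u hu =>
        (update_of_ne (by rintro rfl; exact hxv hu) _ _).symm

end OddColoring

section Critical

variable {G : SimpleGraph V} {n k : ℕ}

lemma isOddColoring_of_injective {φ : V → Fin n} (hφ : Injective φ) : IsOddColoring G φ := by
  refine ⟨fun u v huv h => huv.ne (hφ h), fun v ⟨u, hu⟩ => ⟨φ u, ?_⟩⟩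
  have : {x | x ∈ G.neighborSet v ∧ φ x = φ u} = {u} :=
    Set.ext fun x => ⟨fun hx => hφ hx.2, by rintro rfl; exact ⟨hu, rfl⟩⟩
  rw [this, Set.ncard_singleton]
  exact odd_one

lemma IsOddColoring.comp_injective {φ : V → Fin n} (hφ : IsOddColoring G φ) {m : ℕ}
    {g : Fin n → Fin m} (hg : Injective g) : IsOddColoring G (g ∘ φ) := by
  refine ⟨fun u v huv h => hφ.1 huv (hg h), fun v hv => ?_⟩
  obtain ⟨c, hc⟩ := hφ.2 v hv
  refine ⟨g c, ?_⟩
  have : {u | u ∈ G.neighborSet v ∧ g (φ u) = g c} =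
      {u | u ∈ G.neighborSet v ∧ φ u = c} :=
    Set.ext fun u => and_congr_right fun _ => hg.eq_iff
  rwa [Function.comp_def, this]

lemma exists_isOddColoring_of_oddChrom_lt [Finite W] (H : SimpleGraph W) (h : oddChrom H < k) :
    ∃ φ : W → Fin (k - 1), IsOddColoring H φ := by
  have hne : {m | ∃ φ : W → Fin m, IsOddColoring H φ}.Nonempty :=
    ⟨_, Finite.equivFin W, isOddColoring_of_injective (Finite.equivFin W).injective⟩
  obtain ⟨φ, hφ⟩ := Nat.sInf_mem hne
  exact ⟨_, hφ.comp_injective (Fin.castLE_injective (Nat.le_sub_one_of_lt h))⟩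

lemma OddMinorCritical.not_isOddColoring (hG : OddMinorCritical G k) (hk : 1 ≤ k)
    (φ : V → Fin (k - 1)) : ¬ IsOddColoring G φ := fun hφ => by
  have : oddChrom G ≤ k - 1 := Nat.sInf_le ⟨φ, hφ⟩
  have := hG.1
  omega

lemma OddMinorCritical.exists_isOddColoring_of_isMinor [Finite V] [Finite W]
    (hG : OddMinorCritical G k) {H : SimpleGraph W} (hH : IsMinor H G)
    (hcard : Nat.card W < Nat.card V) : ∃ φ : W → Fin (k - 1), IsOddColoring H φ :=
  exists_isOddColoring_of_oddChrom_lt H (hG.2 W H hH fun h => h.card_le.not_gt hcard)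

lemma isOddColoringOff_of_subtype {v : V} {H : SimpleGraph {x // x ≠ v}}
    {φ : {x // x ≠ v} → Fin n} (hφ : IsOddColoring H φ) {ψ : V → Fin n}
    (hψ : ψ ∘ Subtype.val = φ) (hle : ∀ a b : {x // x ≠ v}, G.Adj a b → H.Adj a b)
    (hN : ∀ x (hx : x ≠ v), ¬ G.Adj x v →
      G.neighborSet x = Subtype.val '' H.neighborSet ⟨x, hx⟩)
    (hv : (G.neighborSet v).Nonempty → HasOddColorAt G ψ v) : IsOddColoringOff G ψ v := by
  subst hψ
  refine ⟨fun a b ha hb hab => hφ.1 (hle ⟨a, ha⟩ ⟨b, hb⟩ hab), fun x hxv hx => ?_⟩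
  by_cases hx' : x = v
  · subst hx'
    exact hv hx
  obtain ⟨y, hy⟩ := hx
  rw [hN x hx' hxv] at hy
  obtain ⟨y, hy, rfl⟩ := hy
  exact HasOddColorAt.of_comp Subtype.val_injective (hN x hx' hxv) (hφ.2 ⟨x, hx'⟩ ⟨y, hy⟩)

lemma IsOddColoring.isOddColoringOff_of_comap {v : V} (hv : ∀ x, ¬ G.Adj v x)
    {φ : {x // x ≠ v} → Fin n} (hφ : IsOddColoring (G.comap Subtype.val) φ)
    {ψ : V → Fin n} (hψ : ψ ∘ Subtype.val = φ) : IsOddColoringOff G ψ v := by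
  refine isOddColoringOff_of_subtype hφ hψ (fun _ _ h => h) (fun x _ _ => ?_)
    fun ⟨x, hx⟩ => (hv x hx).elim
  ext y
  refine ⟨fun hxy => ⟨⟨y, ?_⟩, hxy, rfl⟩, by rintro ⟨y, hy, rfl⟩; exact hy⟩
  rintro rfl
  exact hv x hxy.symm

/-- The colour of `u` occurs exactly once around `v`, since every other neighbour of `v` is
adjacent to `u` after the contraction. -/
lemma IsOddColoring.isOddColoringOff_of_contractInto {u v : V} (hvu : G.Adj v u)
    {φ : {x // x ≠ v} → Fin n} (hφ : IsOddColoring (G.contractInto u v) φ) {ψ : V → Fin n}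
    (hψ : ψ ∘ Subtype.val = φ) : IsOddColoringOff G ψ v := by
  have hψ' : ∀ x (hx : x ≠ v), ψ x = φ ⟨x, hx⟩ := fun x hx => congrFun hψ ⟨x, hx⟩
  refine isOddColoringOff_of_subtype hφ hψ
    (fun a b hab => contractInto_adj.mpr ⟨fun h => hab.ne (congrArg _ h), Or.inl (Or.inl hab)⟩)
    (fun x hx hxv => ?_) (fun _ => ⟨ψ u, ?_⟩)
  · ext y
    refine ⟨fun hxy => ?_, ?_⟩
    · have hyv : y ≠ v := by
        rintro rfl
        exact hxv hxy
      refine ⟨⟨y, hyv⟩, contractInto_adj.mpr ⟨?_, Or.inl (Or.inl hxy)⟩, rfl⟩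
      exact fun h => hxy.ne (congrArg Subtype.val h)
    · rintro ⟨y, hy, rfl⟩
      obtain ⟨-, (hxy | ⟨rfl, -⟩) | (hyx | ⟨-, hvx⟩)⟩ := contractInto_adj.mp hy
      · exact hxy
      · exact (hxv hvu.symm).elim
      · exact hyx.symm
      · exact (hxv hvx.symm).elim
  · have : {y | y ∈ G.neighborSet v ∧ ψ y = ψ u} = {u} := by
      ext y
      refine ⟨fun ⟨hvy, hy⟩ => ?_, by rintro rfl; exact ⟨hvu, rfl⟩⟩
      rw [Set.mem_singleton_iff]
      by_contra hyu
      rw [hψ' y hvy.ne', hψ' u hvu.ne'] at hy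
      have hadj : (G.contractInto u v).Adj ⟨u, hvu.ne'⟩ ⟨y, hvy.ne'⟩ :=
        contractInto_adj.mpr
          ⟨fun h => hyu (congrArg Subtype.val h).symm, Or.inl (Or.inr ⟨rfl, hvy⟩)⟩
      exact hφ.1 hadj hy.symm
    rw [this, Set.ncard_singleton]
    exact odd_one

lemma OddMinorCritical.exists_isOddColoringOff [Finite V] (hG : OddMinorCritical G k)
    (hk : 2 ≤ k) (v : V) : ∃ ψ : V → Fin (k - 1), IsOddColoringOff G ψ v := by
  classical
  have hcard : Nat.card {x // x ≠ v} < Nat.card V := Finite.card_subtype_lt (x := v) (by simp)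
  have extend_comp : ∀ φ : {x // x ≠ v} → Fin (k - 1),
      (fun x => if h : x = v then ⟨0, by omega⟩ else φ ⟨x, h⟩) ∘ Subtype.val = φ :=
    fun φ => funext fun x => dif_neg x.2
  by_cases hv : ∃ u, G.Adj v u
  · obtain ⟨u, hvu⟩ := hv
    obtain ⟨φ, hφ⟩ := hG.exists_isOddColoring_of_isMinor (isMinor_contractInto hvu.symm) hcard
    exact ⟨_, hφ.isOddColoringOff_of_contractInto hvu (extend_comp φ)⟩
  · push Not at hv
    obtain ⟨φ, hφ⟩ := hG.exists_isOddColoring_of_isMinor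
      (isMinor_comap_of_injective G (Subtype.val_injective (p := (· ≠ v)))) hcard
    exact ⟨_, hφ.isOddColoringOff_of_comap hv (extend_comp φ)⟩

end Critical

theorem oddMinorCritical_minDegree_general {V : Type} [Fintype V] (G : SimpleGraph V)
    (k : ℕ) (hG : OddMinorCritical G k) :
    ∀ v : V, k / 2 ≤ deg G v := by
  classical
  intro v
  by_contra! hdeg
  obtain ⟨ψ, hψ⟩ := hG.exists_isOddColoringOff (by omega) v
  obtain ⟨c, hc⟩ := hψ.exists_isOddColoring_update (by omega : 2 * deg G v < k - 1)
  exact hG.not_isOddColoring (by omega) _ hc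

/-- An odd `k⁺`-critical graph with respect to minors (`k ≥ 2`) has minimum degree `≥ ⌊k/2⌋`. -/
theorem oddMinorCritical_minDegree {V : Type} [Fintype V] (G : SimpleGraph V)
    (k : ℕ) (hk : 2 ≤ k) (hG : OddMinorCritical G k) :
    ∀ v : V, k / 2 ≤ deg G v :=
  oddMinorCritical_minDegree_general G k hG
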